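/- Training-conditional coverage for jackknife+: under uniform stability with constant c_{n−1}, bi-Lipschitz parametrization (κ₁, κ₂), and a bound L_{n−1} on the density of |Y₁ − μ_{β̄₋₁}(X₁)|, for all ε, δ > 0: P( P_e^{J+}(D_n) > α + √(log(2/δ)/(2n)) + 2 L_{n−1} κ₂ c_{n−1} ( 1/κ₁ + √( (n/(2κ₁²)) log(2p/ε) ) ) ) ≤ ε + δ. -/

import Mathlib

open MeasureTheory ProbabilityTheory BoundedContinuousFunction

/-- The `k`-th smallest element (1-indexed) of the values of `f : Fin n → ℝ`,
viewed in `EReal`; it is `⊥` when `k = 0` and `⊤` when `k > n`. -/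
noncomputable def kthSmallest {n : ℕ} (f : Fin n → ℝ) (k : ℕ) : EReal :=
  if h : 1 ≤ k ∧ k ≤ n then ((f ((Tuple.sort f) ⟨k - 1, by omega⟩) : ℝ) : EReal)
  else if k = 0 then ⊥ else ⊤

/-!
Uniform stability and the lower Lipschitz bound give every coordinate of the trained parameter
bounded differences `c / κ₁`, so McDiarmid's inequality (Hoeffding's lemma applied one coordinate
at a time) keeps the parameter `β̂₋₁` of the first leave-one-out fit within
`t = (c / κ₁) √(n/2 · log (2p/ε))` of its mean `β̄` in every coordinate, except with probability
`ε`.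
By symmetry of the training map every other leave-one-out sample is one replacement away from the
first, so on that event all leave-one-out predictors lie within `e = κ₂ (c / κ₁ + t)` of `μ_β̄`.
The jackknife+ residuals then move by at most `e`, and a test point whose `β̄`-score is at most
`τ - 2e` is covered as soon as fewer than `⌈(1 - α)(n + 1)⌉` of the `n` calibration `β̄`-scores lie
below `τ`. In place of the DKW inequality we take `τ` a `(1 - α - η)`-quantile of the `β̄`-score:
Hoeffding's inequality for the number of scores below `τ` makes the count condition fail with
probability at most `δ / 2`, and the density bound gives miscoverage at most
`1 - F(τ - 2e) ≤ α + η + 2 L e`.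
-/

open Real Finset
open scoped NNReal

lemma ProbabilityTheory.HasSubgaussianMGF.mono {Ω : Type*} {mΩ : MeasurableSpace Ω}
    {μ : Measure Ω} {X : Ω → ℝ} {c c' : ℝ≥0} (h : HasSubgaussianMGF X c μ) (hc : c ≤ c') :
    HasSubgaussianMGF X c' μ where
  integrable_exp_mul := h.integrable_exp_mul
  mgf_le t := (h.mgf_le t).trans (exp_le_exp.2 (by gcongr))

lemma exists_forall_mem_Icc_add_of_forall_sub_le {E : Type*} [Nonempty E] {h : E → ℝ} {c : ℝ}
    (hh : ∀ x x', h x - h x' ≤ c) : ∃ a, ∀ x, h x ∈ Set.Icc a (a + c) := by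
  obtain ⟨x₀⟩ := ‹Nonempty E›
  have hbdd : BddBelow (Set.range h) := ⟨h x₀ - c, by rintro _ ⟨x, rfl⟩; linarith [hh x₀ x]⟩
  refine ⟨⨅ x, h x, fun x => ⟨ciInf_le hbdd x, ?_⟩⟩
  have : h x - c ≤ ⨅ x', h x' := le_ciInf fun x' => by linarith [hh x x']
  linarith

lemma mul_exp_neg_sqrt_log_div_sq_le {a b : ℝ} (ha : 0 ≤ a) (hb : 0 < b) :
    a * exp (-√(log (a / b)) ^ 2) ≤ b := by
  rcases le_or_gt (log (a / b)) 0 with hlog | hlog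
  · rw [sqrt_eq_zero'.2 hlog]
    simpa [div_le_one hb] using (log_nonpos_iff (div_nonneg ha hb.le)).1 hlog
  · have hab : 0 < a / b := by
      by_contra! h
      linarith [log_nonpos (div_nonneg ha hb.le) (h.trans zero_le_one)]
    rw [sq_sqrt hlog.le, exp_neg, exp_log hab, inv_div,
      mul_div_cancel₀ _ ((div_pos_iff_of_pos_right hb).1 hab).ne']

lemma Nat.floor_mul_add_ceil_one_sub_mul_le {a : ℝ} (ha₀ : 0 ≤ a) (ha₁ : a ≤ 1) (N : ℕ) :
    ⌊a * N⌋₊ + ⌈(1 - a) * N⌉₊ ≤ N := by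
  have hfloor : ⌊a * N⌋₊ ≤ N := floor_le_of_le (by nlinarith [(N.cast_nonneg : (0 : ℝ) ≤ N)])
  have hceil : ⌈(1 - a) * N⌉₊ ≤ N - ⌊a * N⌋₊ := by
    rw [ceil_le, cast_sub hfloor]
    linarith [floor_le (mul_nonneg ha₀ N.cast_nonneg)]
  omega

def HasBoundedDifferences {ι E : Type*} (f : (ι → E) → ℝ) (c : ℝ) : Prop :=
  ∀ (i : ι) (z z' : ι → E), (∀ j, j ≠ i → z j = z' j) → f z - f z' ≤ c

namespace HasBoundedDifferences

variable {ι E : Type*} {f : (ι → E) → ℝ} {c : ℝ}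

lemma sub_le_card_mul [Fintype ι] (hf : HasBoundedDifferences f c) (z z' : ι → E) :
    f z - f z' ≤ Fintype.card ι * c := by
  classical
  suffices ∀ s : Finset ι, f z - f (s.piecewise z' z) ≤ #s * c by simpa using this univ
  intro s
  induction s using Finset.induction_on with
  | empty => simp
  | insert i s hi ih =>
    have hstep : f (s.piecewise z' z) - f (Function.update (s.piecewise z' z) i (z' i)) ≤ c :=
      hf i _ _ fun j hj => (Function.update_of_ne hj _ _).symm
    rw [piecewise_insert, card_insert_of_notMem hi]
    push_cast
    linarith

lemma mem_Icc [Fintype ι] (hf : HasBoundedDifferences f c) (z z₀ : ι → E) :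
    f z ∈ Set.Icc (f z₀ - Fintype.card ι * c) (f z₀ + Fintype.card ι * c) :=
  ⟨by linarith [hf.sub_le_card_mul z₀ z], by linarith [hf.sub_le_card_mul z z₀]⟩

lemma integrable_exp_mul [Fintype ι] [Nonempty E] [MeasurableSpace E]
    {μ : Measure (ι → E)} [IsFiniteMeasure μ] (hf : HasBoundedDifferences f c)
    (hfm : Measurable f) (M t : ℝ) : Integrable (fun z => exp (t * (f z - M))) μ := by
  obtain ⟨z₀⟩ : Nonempty (ι → E) := inferInstance
  refine integrable_exp_mul_of_mem_Icc (a := f z₀ - Fintype.card ι * c - M)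
    (b := f z₀ + Fintype.card ι * c - M) (hfm.sub_const M).aemeasurable (ae_of_all _ fun z => ?_)
  obtain ⟨h₁, h₂⟩ := hf.mem_Icc z z₀
  exact ⟨sub_le_sub_right h₁ M, sub_le_sub_right h₂ M⟩

end HasBoundedDifferences

/-- One step of McDiarmid's argument: integrating out the first coordinate costs the factor of
Hoeffding's lemma. -/
lemma integral_exp_prod_le {E Y : Type*} [MeasurableSpace E] [MeasurableSpace Y]
    (ν : Measure E) (ρ : Measure Y) [IsProbabilityMeasure ν] [IsProbabilityMeasure ρ]
    {F : E × Y → ℝ} (hF : Measurable F) {c : ℝ≥0} (hc : ∀ x x' r, F (x, r) - F (x', r) ≤ c)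
    {M t : ℝ} (hint : Integrable (fun y => exp (t * (F y - M))) (ν.prod ρ))
    (hint' : Integrable (fun r => exp (t * (∫ x, F (x, r) ∂ν - M))) ρ) :
    ∫ y, exp (t * (F y - M)) ∂(ν.prod ρ)
      ≤ exp ((c / 2) ^ 2 * t ^ 2 / 2) * ∫ r, exp (t * (∫ x, F (x, r) ∂ν - M)) ∂ρ := by
  have := nonempty_of_isProbabilityMeasure ν
  have hinner : ∀ r, ∫ x, exp (t * (F (x, r) - M)) ∂ν
      ≤ exp ((c / 2) ^ 2 * t ^ 2 / 2) * exp (t * (∫ x, F (x, r) ∂ν - M)) := by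
    intro r
    obtain ⟨a, ha⟩ := exists_forall_mem_Icc_add_of_forall_sub_le fun x x' => hc x x' r
    have hHoeffding := (hasSubgaussianMGF_of_mem_Icc
      (hF.comp (measurable_id.prodMk measurable_const)).aemeasurable (ae_of_all ν ha)).mgf_le t
    have hsplit : ∀ x, exp (t * (F (x, r) - M))
        = exp (t * (∫ x, F (x, r) ∂ν - M)) * exp (t * (F (x, r) - ∫ x, F (x, r) ∂ν)) := by
      intro x; rw [← exp_add]; ring_nf
    simp only [hsplit, integral_const_mul]
    rw [mul_comm]
    gcongr
    simpa [mgf] using hHoeffding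
  calc ∫ y, exp (t * (F y - M)) ∂(ν.prod ρ)
      = ∫ r, ∫ x, exp (t * (F (x, r) - M)) ∂ν ∂ρ := integral_prod_symm _ hint
    _ ≤ ∫ r, exp ((c / 2) ^ 2 * t ^ 2 / 2) * exp (t * (∫ x, F (x, r) ∂ν - M)) ∂ρ :=
        integral_mono_of_nonneg (ae_of_all _ fun r => integral_nonneg fun x => (exp_pos _).le)
          (hint'.const_mul _) (ae_of_all _ hinner)
    _ = _ := integral_const_mul _ _

/-- **McDiarmid's inequality**, in sub-Gaussian form. -/
theorem HasBoundedDifferences.hasSubgaussianMGF_pi {E : Type*} [MeasurableSpace E]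
    (ν : Measure E) [IsProbabilityMeasure ν] {c : ℝ≥0} :
    ∀ {n : ℕ} {f : (Fin n → E) → ℝ}, Measurable f → HasBoundedDifferences f c →
      HasSubgaussianMGF (fun z => f z - ∫ w, f w ∂Measure.pi fun _ => ν) (n * (c / 2) ^ 2)
        (Measure.pi fun _ => ν)
  | 0, f, _, _ => by
    have hconst : ∀ z : Fin 0 → E, f z - ∫ w, f w ∂(Measure.pi fun _ => ν) = 0 := fun z => by
      simp [Subsingleton.elim _ z]
    simp [hconst]
  | n + 1, f, hfm, hf => by
    have := nonempty_of_isProbabilityMeasure ν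
    obtain ⟨z₀⟩ : Nonempty (Fin (n + 1) → E) := inferInstance
    set Q := Measure.pi fun _ : Fin n => ν
    let e := MeasurableEquiv.piFinSuccAbove (fun _ : Fin (n + 1) => E) 0
    have he : MeasurePreserving e.symm (ν.prod Q) (Measure.pi fun _ => ν) :=
      (measurePreserving_piFinSuccAbove (fun _ : Fin (n + 1) => ν) 0).symm
    have he_apply : ∀ y, e.symm y = Fin.cons y.1 y.2 := fun y => by simp [e]; rfl
    set F : E × (Fin n → E) → ℝ := fun y => f (e.symm y)
    have hFm : Measurable F := hfm.comp e.symm.measurable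
    have hFx : ∀ x x' r, F (x, r) - F (x', r) ≤ c := fun x x' r => hf 0 _ _ fun j hj => by
      obtain ⟨k, rfl⟩ := Fin.exists_succ_eq.2 hj
      simp [he_apply]
    have hFint : ∀ r, Integrable (fun x => F (x, r)) ν := fun r =>
      Integrable.of_mem_Icc _ _ (hFm.comp (measurable_id.prodMk measurable_const)).aemeasurable
        (ae_of_all _ fun x => hf.mem_Icc (e.symm (x, r)) z₀)
    set g : (Fin n → E) → ℝ := fun r => ∫ x, F (x, r) ∂ν
    have hg : HasBoundedDifferences g c := by
      intro i r r' hrr'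
      rw [← integral_sub (hFint r) (hFint r')]
      refine (integral_mono ((hFint r).sub (hFint r')) (integrable_const (c : ℝ))
        fun x => hf i.succ _ _ fun j hj => ?_).trans_eq (by simp)
      simp only [he_apply]
      cases j using Fin.cases with
      | zero => rfl
      | succ j => exact hrr' j fun h => hj (h ▸ rfl)
    have hgm : Measurable g := hFm.stronglyMeasurable.integral_prod_left'.measurable
    have hFprod : Integrable F (ν.prod Q) :=
      Integrable.of_mem_Icc _ _ hFm.aemeasurable (ae_of_all _ fun y => hf.mem_Icc (e.symm y) z₀)
    set M := ∫ w, f w ∂(Measure.pi fun _ => ν)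
    have hmean : ∫ r, g r ∂Q = M := (integral_prod_symm F hFprod).symm.trans (he.integral_comp' f)
    have hIH := hasSubgaussianMGF_pi ν hgm hg
    rw [hmean] at hIH
    refine ⟨hf.integrable_exp_mul hfm M, fun t => ?_⟩
    calc mgf (fun z => f z - M) (Measure.pi fun _ => ν) t
        = ∫ y, exp (t * (F y - M)) ∂(ν.prod Q) := by rw [mgf, ← he.integral_comp']
      _ ≤ exp ((c / 2) ^ 2 * t ^ 2 / 2) * mgf (fun r => g r - M) Q t :=
          integral_exp_prod_le ν Q hFm hFx ((he.integrable_comp_emb e.symm.measurableEmbedding).2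
            (hf.integrable_exp_mul hfm M t)) (hIH.integrable_exp_mul t)
      _ ≤ exp ((c / 2) ^ 2 * t ^ 2 / 2) * exp (↑(n * (c / 2) ^ 2 : ℝ≥0) * t ^ 2 / 2) := by
          gcongr; exact hIH.mgf_le t
      _ = exp (↑((n + 1 : ℕ) * (c / 2) ^ 2 : ℝ≥0) * t ^ 2 / 2) := by
          rw [← exp_add]; push_cast; ring_nf

section IID

variable {Ω E : Type*} [MeasurableSpace Ω] [MeasurableSpace E] {μ : Measure Ω} {ν : Measure E}
  [IsProbabilityMeasure ν]

theorem HasBoundedDifferences.hasSubgaussianMGF_of_iIndepFun {n : ℕ} {Z : Fin n → Ω → E}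
    (hZ : ∀ i, Measurable (Z i)) (hind : iIndepFun Z μ) (hid : ∀ i, μ.map (Z i) = ν)
    {f : (Fin n → E) → ℝ} {c : ℝ≥0} (hfm : Measurable f) (hf : HasBoundedDifferences f c) :
    HasSubgaussianMGF (fun ω => f (fun i => Z i ω) - ∫ ω', f (fun i => Z i ω') ∂μ)
      (n * (c / 2) ^ 2) μ := by
  have hZm : Measurable fun ω i => Z i ω := measurable_pi_lambda _ hZ
  have hlaw : μ.map (fun ω i => Z i ω) = Measure.pi fun _ => ν := by
    simpa [hid] using hind.map_fun_eq_pi_map fun i => (hZ i).aemeasurable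
  have h := hf.hasSubgaussianMGF_pi ν hfm
  rw [← hlaw, integral_map hZm.aemeasurable hfm.aestronglyMeasurable] at h
  exact h.of_map hZm.aemeasurable

lemma measureReal_exists_le_abs_le {ι : Type*} [Fintype ι] {X : ι → Ω → ℝ} {c : ℝ≥0}
    (hX : ∀ j, HasSubgaussianMGF (X j) c μ) {s : ℝ} (hs : 0 ≤ s) :
    μ.real {ω | ∃ j, s ≤ |X j ω|} ≤ 2 * Fintype.card ι * exp (-s ^ 2 / (2 * c)) := by
  have hunion : {ω | ∃ j, s ≤ |X j ω|} = ⋃ j, ({ω | s ≤ X j ω} ∪ {ω | s ≤ (-X j) ω}) := by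
    ext ω; simp [le_abs]
  calc μ.real {ω | ∃ j, s ≤ |X j ω|}
      ≤ ∑ j, μ.real ({ω | s ≤ X j ω} ∪ {ω | s ≤ (-X j) ω}) := by
        rw [hunion]; exact measureReal_iUnion_fintype_le _
    _ ≤ ∑ _j : ι, 2 * exp (-s ^ 2 / (2 * c)) := by
        gcongr with j
        refine (measureReal_union_le _ _).trans ?_
        linarith [(hX j).measure_ge_le hs, (hX j).neg.measure_ge_le hs]
    _ = 2 * Fintype.card ι * exp (-s ^ 2 / (2 * c)) := by simp; ring

theorem measureReal_exists_le_abs_sub_integral_le {m p : ℕ} {Z : Fin m → Ω → E}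
    (hZ : ∀ i, Measurable (Z i)) (hind : iIndepFun Z μ) (hid : ∀ i, μ.map (Z i) = ν)
    {T : (Fin m → E) → Fin p → ℝ} (hT : Measurable T) {c₁ : ℝ} (hc₁ : 0 < c₁)
    (hTc : ∀ (i : Fin m) (z z' : Fin m → E), (∀ j, j ≠ i → z j = z' j) → ‖T z - T z'‖ ≤ c₁)
    {ε : ℝ} (hε : 0 < ε) :
    μ.real {ω | ∃ j, c₁ * √((m + 1) / 2 * log (2 * p / ε)) ≤
      |T (fun i => Z i ω) j - ∫ ω', T (fun i => Z i ω') j ∂μ|} ≤ ε := by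
  lift c₁ to ℝ≥0 using hc₁.le
  have hsubG : ∀ j, HasSubgaussianMGF
      (fun ω => T (fun i => Z i ω) j - ∫ ω', T (fun i => Z i ω') j ∂μ)
      ((m + 1) * (c₁ / 2) ^ 2) μ := by
    refine fun j => (HasBoundedDifferences.hasSubgaussianMGF_of_iIndepFun hZ hind hid
      ((measurable_pi_apply j).comp hT) fun i z z' hzz' => ?_).mono (by gcongr; simp)
    calc T z j - T z' j ≤ ‖(T z - T z') j‖ := (le_abs_self _).trans_eq (Real.norm_eq_abs _).symm
      _ ≤ c₁ := (norm_le_pi_norm _ j).trans (hTc i z z' hzz')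
  refine (measureReal_exists_le_abs_le hsubG (by positivity)).trans ?_
  rw [Fintype.card_fin]
  refine (le_of_eq ?_).trans (mul_exp_neg_sqrt_log_div_sq_le (a := 2 * p) (by positivity) hε)
  congr 2
  rw [sqrt_mul (by positivity), mul_pow, mul_pow, sq_sqrt (by positivity)]
  push_cast
  field_simp

theorem measureReal_le_card_filter_mem_le {n : ℕ} (hn : 0 < n) {Z : Fin n → Ω → E}
    (hZ : ∀ i, Measurable (Z i)) (hind : iIndepFun Z μ) (hid : ∀ i, μ.map (Z i) = ν) {S : Set E}
    (hS : MeasurableSet S) [DecidablePred (· ∈ S)] {δ : ℝ} (hδ : 0 < δ) :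
    μ.real {ω | n * ν.real S + n * √(log (1 / δ) / (2 * n)) ≤ #{i | Z i ω ∈ S}} ≤ δ := by
  have := hind.isProbabilityMeasure
  have hcard : ∀ z : Fin n → E, (#{i | z i ∈ S} : ℝ) = ∑ i, S.indicator 1 (z i) := fun z => by
    rw [natCast_card_filter]; simp [Set.indicator_apply]
  have hSm : Measurable (S.indicator (1 : E → ℝ)) := measurable_one.indicator hS
  have hfm : Measurable fun z : Fin n → E => (#{i | z i ∈ S} : ℝ) := by
    simp only [hcard]
    exact Finset.measurable_sum _ fun i _ => hSm.comp (measurable_pi_apply i)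
  have hf : HasBoundedDifferences (fun z : Fin n → E => (#{i | z i ∈ S} : ℝ)) (1 : ℝ≥0) := by
    intro i z z' hzz'
    have : #{j | z j ∈ S} ≤ #{j | z' j ∈ S} + 1 := by
      refine (card_le_card fun j hj => ?_).trans (card_insert_le i _)
      rcases eq_or_ne j i with rfl | hji
      · exact mem_insert_self _ _
      · simp_all
    push_cast
    linarith [(Nat.cast_le (α := ℝ)).2 this, Nat.cast_add_one (R := ℝ) #{j | z' j ∈ S}]
  have hmean : ∫ ω, (#{i | Z i ω ∈ S} : ℝ) ∂μ = n * ν.real S := by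
    have hterm : ∀ i, ∫ ω, S.indicator 1 (Z i ω) ∂μ = ν.real S := fun i => by
      rw [← integral_map (hZ i).aemeasurable hSm.aestronglyMeasurable, hid,
        integral_indicator_one hS]
    simp only [hcard]
    rw [integral_finsetSum (f := fun i ω => S.indicator (1 : E → ℝ) (Z i ω)) _ fun i _ =>
      (integrable_map_measure hSm.aestronglyMeasurable (hZ i).aemeasurable).1
        (by rw [hid]; exact (integrable_const (1 : ℝ)).indicator hS)]
    simp [hterm]
  have hHoeffding := (hf.hasSubgaussianMGF_of_iIndepFun hZ hind hid hfm).measure_ge_le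
    (ε := n * √(log (1 / δ) / (2 * n))) (by positivity)
  rw [hmean] at hHoeffding
  refine (measureReal_mono fun ω hω => ?_).trans (hHoeffding.trans
    ((le_of_eq ?_).trans (mul_exp_neg_sqrt_log_div_sq_le (a := 1) zero_le_one hδ)))
  · simp only [Set.mem_ofPred_eq] at hω ⊢
    linarith
  · have h2n : √(2 * n : ℝ) ^ 2 = 2 * n := sq_sqrt (by positivity)
    rw [one_mul, sqrt_div' _ (by positivity), mul_div_assoc', div_pow, mul_pow, h2n]
    push_cast
    field_simp

end IID

lemma exists_quantile {α : Type*} [MeasurableSpace α] (ν : Measure α) [IsProbabilityMeasure ν]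
    {s : α → ℝ} (hs : Measurable s) {q : ℝ} (hq₀ : 0 < q) (hq₁ : q < 1) :
    ∃ t, ν.real {x | s x < t} ≤ q ∧ q ≤ ν.real {x | s x ≤ t} := by
  set ρ := ν.map s
  have : IsProbabilityMeasure ρ := Measure.isProbabilityMeasure_map hs.aemeasurable
  have hle : ∀ t, ν.real {x | s x ≤ t} = cdf ρ t := fun t => by
    rw [cdf_eq_real, map_measureReal_apply hs measurableSet_Iic]; rfl
  have hlt : ∀ t, ν.real {x | s x < t} = Function.leftLim (cdf ρ) t := fun t => by
    change ν.real (s ⁻¹' Set.Iio t) = _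
    have hIio := (cdf ρ).measure_Iio (tendsto_cdf_atBot ρ) t
    rw [measure_cdf, sub_zero] at hIio
    rw [← map_measureReal_apply hs measurableSet_Iio, measureReal_def, hIio, ENNReal.toReal_ofReal
      ((cdf_nonneg ρ (t - 1)).trans ((monotone_cdf ρ).le_leftLim (by linarith)))]
  set S := {t | q ≤ cdf ρ t}
  have hne : S.Nonempty :=
    ((tendsto_order.1 (tendsto_cdf_atTop ρ)).1 q hq₁).exists.imp fun _ h => h.le
  have hbdd : BddBelow S := by
    obtain ⟨t₀, ht₀⟩ := Filter.eventually_atBot.1 ((tendsto_order.1 (tendsto_cdf_atBot ρ)).2 q hq₀)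
    exact ⟨t₀, fun t ht => by by_contra! h; exact (ht₀ t h.le).not_ge ht⟩
  refine ⟨sInf S, ?_, ?_⟩
  · rw [hlt]
    refine le_of_tendsto ((monotone_cdf ρ).tendsto_leftLim _) ?_
    filter_upwards [self_mem_nhdsWithin] with t ht
    exact (not_le.1 (notMem_of_lt_csInf (s := S) ht hbdd)).le
  · rw [hle]
    refine ge_of_tendsto (((cdf ρ).right_continuous _).mono Set.Ioi_subset_Ici_self) ?_
    filter_upwards [self_mem_nhdsWithin] with t ht
    obtain ⟨u, hu, hut⟩ := exists_lt_of_csInf_lt hne ht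
    exact hu.trans (monotone_cdf ρ hut.le)

lemma kthSmallest_le_of_le_card {n : ℕ} (f : Fin n → ℝ) {k : ℕ} {v : ℝ}
    (h : k ≤ #{i | f i ≤ v}) : kthSmallest f k ≤ v := by
  unfold kthSmallest
  split_ifs with hk hk0
  · rw [EReal.coe_le_coe_iff]
    by_contra! hlt
    set σ := Tuple.sort f
    have hmaps : Set.MapsTo σ.symm (({i | f i ≤ v} : Finset (Fin n)) : Set (Fin n))
        (Iio (⟨k - 1, by omega⟩ : Fin n)) := by
      intro i hi
      simp only [coe_filter, mem_univ, true_and, Set.mem_ofPred_eq, coe_Iio, Set.mem_Iio] at hi ⊢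
      by_contra! hge
      have := Tuple.monotone_sort f hge
      simp only [Function.comp_apply, Equiv.apply_symm_apply, σ] at this
      linarith
    have := card_le_card_of_injOn _ hmaps σ.symm.injective.injOn
    simp only [Fin.card_Iio] at this
    omega
  · exact bot_le
  · have : #{i | f i ≤ v} ≤ n := (card_filter_le _ _).trans (by simp)
    omega

lemma le_kthSmallest_of_card_lt {n : ℕ} (f : Fin n → ℝ) {k : ℕ} {v : ℝ}
    (h : #{i | f i < v} < k) : v ≤ kthSmallest f k := by
  unfold kthSmallest
  split_ifs with hk hk0
  · rw [EReal.coe_le_coe_iff]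
    by_contra! hlt
    set σ := Tuple.sort f
    have hmaps : Set.MapsTo σ (Iic (⟨k - 1, by omega⟩ : Fin n))
        (({i | f i < v} : Finset (Fin n)) : Set (Fin n)) := by
      intro j hj
      simp only [coe_Iic, Set.mem_Iic, coe_filter, mem_univ, true_and, Set.mem_ofPred_eq] at hj ⊢
      exact (Tuple.monotone_sort f hj).trans_lt hlt
    have := card_le_card_of_injOn _ hmaps σ.injective.injOn
    simp only [Fin.card_Iic] at this
    omega
  · omega
  · exact le_top

section JackknifePlus

variable {X : Type*} [TopologicalSpace X] {n k K : ℕ}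

/-- `f i` is the predictor trained without the data point `z i`. -/
def JackknifePlusCovers (k K : ℕ) (f : Fin n → X →ᵇ ℝ) (z : Fin n → X × ℝ) (w : X × ℝ) : Prop :=
  kthSmallest (fun i => f i w.1 - |(z i).2 - f i (z i).1|) k ≤ (w.2 : EReal) ∧
    (w.2 : EReal) ≤ kthSmallest (fun i => f i w.1 + |(z i).2 - f i (z i).1|) K

lemma jackknifePlusCovers_of_abs_sub_le (hkK : k + K ≤ n + 1) {f : Fin n → X →ᵇ ℝ} {g : X →ᵇ ℝ}
    {z : Fin n → X × ℝ} {e t : ℝ} (hf : ∀ i, ‖f i - g‖ ≤ e)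
    (hcount : #{i | |(z i).2 - g (z i).1| < t} < K) {w : X × ℝ} (hw : |w.2 - g w.1| ≤ t - 2 * e) :
    JackknifePlusCovers k K f z w := by
  have hclose : ∀ i x, |f i x - g x| ≤ e := fun i x => by
    have := norm_coe_le_norm (f i - g) x
    rw [BoundedContinuousFunction.coe_sub, Pi.sub_apply, Real.norm_eq_abs] at this
    exact this.trans (hf i)
  set R := fun i => |(z i).2 - f i (z i).1|
  set S := fun i => |(z i).2 - g (z i).1|
  replace hcount : #{i | S i < t} < K := hcount
  have hRS : ∀ i, |R i - S i| ≤ e := fun i =>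
    calc |R i - S i| ≤ |((z i).2 - f i (z i).1) - ((z i).2 - g (z i).1)| :=
          abs_abs_sub_abs_le_abs_sub _ _
      _ = |f i (z i).1 - g (z i).1| := by rw [sub_sub_sub_cancel_left, abs_sub_comm]
      _ ≤ e := hclose i _
  constructor
  · refine kthSmallest_le_of_le_card _ ?_
    have hsplit := card_filter_add_card_filter_not (s := univ) (fun i => S i < t)
    rw [card_univ, Fintype.card_fin] at hsplit
    calc k ≤ #{i | ¬ S i < t} := by omega
      _ ≤ #{i | f i w.1 - R i ≤ w.2} := card_le_card fun i hi => by
          simp only [mem_filter, mem_univ, true_and, not_lt] at hi ⊢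
          linarith [abs_le.1 (hclose i w.1), abs_le.1 (hRS i), abs_le.1 hw]
  · refine le_kthSmallest_of_card_lt _ ((card_le_card fun i hi => ?_).trans_lt hcount)
    simp only [mem_filter, mem_univ, true_and] at hi ⊢
    linarith [abs_le.1 (hclose i w.1), abs_le.1 (hRS i), abs_le.1 hw]

lemma measureReal_not_jackknifePlusCovers_le [MeasurableSpace X] [OpensMeasurableSpace X]
    (ν : Measure (X × ℝ)) [IsProbabilityMeasure ν] (hkK : k + K ≤ n + 1) (f : Fin n → X →ᵇ ℝ)
    (g : X →ᵇ ℝ) (z : Fin n → X × ℝ) {e t L : ℝ} (he : 0 ≤ e) (hf : ∀ i, ‖f i - g‖ ≤ e)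
    (hcount : #{i | |(z i).2 - g (z i).1| < t} < K)
    (hdens : ∀ t t' : ℝ, t ≤ t' →
      ν.real {w | |w.2 - g w.1| ≤ t'} - ν.real {w | |w.2 - g w.1| ≤ t} ≤ L * (t' - t)) :
    ν.real {w | ¬ JackknifePlusCovers k K f z w}
      ≤ 1 - ν.real {w | |w.2 - g w.1| ≤ t} + 2 * L * e := by
  have hs : Measurable fun w : X × ℝ => |w.2 - g w.1| :=
    (measurable_snd.sub (g.continuous.measurable.comp measurable_fst)).abs
  calc _ ≤ ν.real {w | |w.2 - g w.1| ≤ t - 2 * e}ᶜ :=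
        measureReal_mono fun w hw hle => by
          exact hw (jackknifePlusCovers_of_abs_sub_le hkK hf hcount hle)
    _ = 1 - ν.real {w | |w.2 - g w.1| ≤ t - 2 * e} :=
        probReal_compl_eq_one_sub (measurableSet_le hs measurable_const)
    _ ≤ _ := by linarith [hdens (t - 2 * e) t (by linarith)]

end JackknifePlus

section LeaveOneOut

variable {γ : Type*} {m : ℕ}

lemma norm_sub_le_of_succAbove {V : Type*} [SeminormedAddCommGroup V] {c : ℝ} (hc : 0 ≤ c)
    {g : (Fin m → γ) → V} (hsym : ∀ (σ : Equiv.Perm (Fin m)) z, g (z ∘ σ) = g z)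
    (hstab : ∀ (i : Fin m) (z z' : Fin m → γ), (∀ j, j ≠ i → z j = z' j) → ‖g z - g z'‖ ≤ c)
    (z : Fin (m + 1) → γ) (i : Fin (m + 1)) :
    ‖g (fun k => z (i.succAbove k)) - g (fun k => z ((0 : Fin (m + 1)).succAbove k))‖ ≤ c := by
  cases i using Fin.cases with
  | zero => simpa using hc
  | succ i =>
    rw [← hsym i.cycleRange]
    refine hstab i _ _ fun j hj => ?_
    simp only [Function.comp_apply, Fin.succAbove_cycleRange, Fin.succAbove_zero]
    rw [Equiv.swap_apply_of_ne_of_ne (Fin.succ_ne_zero j) fun h => hj (Fin.succ_injective _ h)]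

lemma norm_sub_le_of_succAbove_of_biLipschitz {P V : Type*} [SeminormedAddCommGroup P]
    [SeminormedAddCommGroup V] {c κ₁ κ₂ t : ℝ} (hc : 0 ≤ c) (hκ₁ : 0 < κ₁) (hκ₂ : 0 ≤ κ₂)
    {μ : P → V}
    (hbilip : ∀ β β' : P, κ₁ * ‖β - β'‖ ≤ ‖μ β - μ β'‖ ∧ ‖μ β - μ β'‖ ≤ κ₂ * ‖β - β'‖)
    {T : (Fin m → γ) → P} (hsym : ∀ (σ : Equiv.Perm (Fin m)) z, T (z ∘ σ) = T z)
    (hstab : ∀ (i : Fin m) (z z' : Fin m → γ), (∀ j, j ≠ i → z j = z' j) →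
      ‖μ (T z) - μ (T z')‖ ≤ c)
    (z : Fin (m + 1) → γ) {β : P} (hβ : ‖T (fun k => z ((0 : Fin (m + 1)).succAbove k)) - β‖ ≤ t)
    (i : Fin (m + 1)) :
    ‖μ (T (fun k => z (i.succAbove k))) - μ β‖ ≤ κ₂ * (c / κ₁ + t) := by
  have hloo : ‖T (fun k => z (i.succAbove k)) - T (fun k => z ((0 : Fin (m + 1)).succAbove k))‖
      ≤ c / κ₁ := by
    rw [le_div_iff₀' hκ₁]
    exact (hbilip _ _).1.trans
      (norm_sub_le_of_succAbove hc (g := fun z => μ (T z)) (fun σ z => by rw [hsym]) hstab z i)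
  calc ‖μ (T (fun k => z (i.succAbove k))) - μ β‖
      ≤ κ₂ * ‖T (fun k => z (i.succAbove k)) - β‖ := (hbilip _ _).2
    _ ≤ κ₂ * (c / κ₁ + t) := by
      gcongr
      exact (norm_sub_le_norm_sub_add_norm_sub _ _ _).trans (add_le_add hloo hβ)

end LeaveOneOut

/-- Here `n = m + 1`, and `c`, `L` stand for the paper's `c_{n−1}`, `L_{n−1}`. -/
theorem stmt9_general {Ω : Type*} [MeasureSpace Ω] [IsProbabilityMeasure (ℙ : Measure Ω)]
    {X : Type*} [MeasurableSpace X] [TopologicalSpace X] [BorelSpace X]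
    (ν : Measure (X × ℝ)) [IsProbabilityMeasure ν]
    (m p : ℕ)
    (α c κ₁ κ₂ L : ℝ) (hα : 0 < α) (hα1 : α < 1) (hc : 0 < c)
    (hκ₁ : 0 < κ₁) (hκ₂ : 0 < κ₂) (hL : 0 ≤ L)
    (μ : (Fin p → ℝ) → (X →ᵇ ℝ))
    (T : (Fin m → (X × ℝ)) → (Fin p → ℝ)) (hT : Measurable T)
    (hsym : ∀ (σ : Equiv.Perm (Fin m)) (z : Fin m → X × ℝ), T (z ∘ σ) = T z)
    (hstab : ∀ (i : Fin m) (z z' : Fin m → X × ℝ), (∀ j, j ≠ i → z j = z' j) →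
      ‖μ (T z) - μ (T z')‖ ≤ c)
    (hbilip : ∀ β β' : Fin p → ℝ,
      κ₁ * ‖β - β'‖ ≤ ‖μ β - μ β'‖ ∧ ‖μ β - μ β'‖ ≤ κ₂ * ‖β - β'‖)
    (Zs : Fin (m + 1) → Ω → X × ℝ) (hmeas : ∀ i, Measurable (Zs i))
    (hindep : iIndepFun Zs ℙ)
    (hident : ∀ i, Measure.map (Zs i) ℙ = ν)
    (βbar : Fin p → ℝ)
    (hβbar : βbar = fun j => ∫ ω, T (fun k => Zs ((0 : Fin (m + 1)).succAbove k) ω) j ∂ℙ)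
    (hdens : ∀ t t' : ℝ, t ≤ t' →
      (ν {z : X × ℝ | |z.2 - μ βbar z.1| ≤ t'}).toReal -
        (ν {z : X × ℝ | |z.2 - μ βbar z.1| ≤ t}).toReal ≤ L * (t' - t))
    (ε δ : ℝ) (hε : 0 < ε) (hδ : 0 < δ) :
    (ℙ {ω | α + Real.sqrt (Real.log (2 / δ) / (2 * (m + 1)))
        + 2 * L * κ₂ * c *
            (1 / κ₁ + Real.sqrt (((m + 1) / (2 * κ₁ ^ 2)) * Real.log (2 * p / ε)))
        < (ν {z : X × ℝ |
            ¬ (kthSmallest (fun i : Fin (m + 1) =>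
                  μ (T (fun k => Zs (i.succAbove k) ω)) z.1 -
                    |(Zs i ω).2 - μ (T (fun k => Zs (i.succAbove k) ω)) (Zs i ω).1|)
                  ⌊α * (m + 2)⌋₊ ≤ (z.2 : EReal) ∧
                (z.2 : EReal) ≤ kthSmallest (fun i : Fin (m + 1) =>
                  μ (T (fun k => Zs (i.succAbove k) ω)) z.1 +
                    |(Zs i ω).2 - μ (T (fun k => Zs (i.succAbove k) ω)) (Zs i ω).1|)
                  ⌈(1 - α) * (m + 2)⌉₊)}).toReal}).toReal ≤ ε + δ := by
  set η := √(log (2 / δ) / (2 * (m + 1)))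
  have hη : 0 ≤ η := sqrt_nonneg _
  set t' := c / κ₁ * √((m + 1) / 2 * log (2 * p / ε))
  set e := κ₂ * (c / κ₁ + t')
  have he : 0 ≤ e := by positivity
  have hthreshold : 2 * L * κ₂ * c * (1 / κ₁ + √((m + 1) / (2 * κ₁ ^ 2) * log (2 * p / ε)))
      = 2 * L * e := by
    rw [show (m + 1) / (2 * κ₁ ^ 2) * log (2 * p / ε) = (m + 1) / 2 * log (2 * p / ε) / κ₁ ^ 2 by
      field_simp, sqrt_div' _ (by positivity), sqrt_sq hκ₁.le]
    ring
  rw [hthreshold]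
  set s : X × ℝ → ℝ := fun w => |w.2 - μ βbar w.1|
  have hs : Measurable s :=
    (measurable_snd.sub ((μ βbar).continuous.measurable.comp measurable_fst)).abs
  rcases le_or_gt (1 - α - η) 0 with hq | hq
  · refine le_trans ?_ (by positivity : (0 : ℝ) ≤ ε + δ)
    refine (measureReal_mono (s₂ := ∅) (fun ω hω => ?_) (measure_ne_top _ _)).trans_eq
      measureReal_empty
    rw [Set.mem_ofPred_eq] at hω
    exact (not_lt.2 (measureReal_le_one.trans (by linarith [mul_nonneg hL he]))) hω
  obtain ⟨t, hlt, hle⟩ := exists_quantile ν hs hq (by linarith)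
  have hparam := measureReal_exists_le_abs_sub_integral_le
    (Z := fun k => Zs ((0 : Fin (m + 1)).succAbove k)) (fun k => hmeas _)
    (hindep.precomp Fin.succAbove_right_injective) (fun k => hident _) hT (div_pos hc hκ₁)
    (fun i z z' hzz' => by rw [le_div_iff₀' hκ₁]; exact (hbilip _ _).1.trans (hstab i z z' hzz'))
    hε
  have hscores := measureReal_le_card_filter_mem_le m.succ_pos hmeas hindep hident
    (S := {w | s w < t}) (measurableSet_lt hs measurable_const) (half_pos hδ)
  refine (measureReal_mono fun ω hω => by_contra fun hbad => ?_).trans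
    ((measureReal_union_le _ _).trans (add_le_add hparam (hscores.trans (half_le_self hδ.le))))
  rw [Set.mem_union, not_or] at hbad
  obtain ⟨hnparam, hnscores⟩ := hbad
  have hβ : ‖T (fun k => Zs ((0 : Fin (m + 1)).succAbove k) ω) - βbar‖ ≤ t' := by
    refine (pi_norm_le_iff_of_nonneg (by positivity)).2 fun j => ?_
    rw [hβbar]
    exact (not_le.1 fun h => hnparam ⟨j, h⟩).le
  have hcount : (#{i | Zs i ω ∈ {w | s w < t}} : ℝ) < ⌈(1 - α) * (m + 2)⌉₊ := by
    rw [Set.mem_ofPred_eq, not_le, one_div_div] at hnscores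
    push_cast at hnscores
    nlinarith [Nat.le_ceil ((1 - α) * (m + 2))]
  have hkK := Nat.floor_mul_add_ceil_one_sub_mul_le hα.le hα1.le (m + 2)
  push_cast at hkK
  rw [Set.mem_ofPred_eq] at hω
  refine (not_lt.2 ?_) hω
  calc _ ≤ 1 - ν.real {w | s w ≤ t} + 2 * L * e :=
        measureReal_not_jackknifePlusCovers_le ν hkK
          (fun i => μ (T (fun k => Zs (i.succAbove k) ω))) (μ βbar) (fun i => Zs i ω) he
          (norm_sub_le_of_succAbove_of_biLipschitz hc.le hκ₁ hκ₂.le hbilip hsym hstab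
            (fun i => Zs i ω) hβ)
          (by exact_mod_cast hcount) hdens
    _ ≤ _ := by linarith

/-- Theorem 1 (training-conditional coverage for jackknife+).  The dataset has
`m + 1` i.i.d. points with common law `ν`; `T` trains on `m` points, and `c`
plays the role of `c_{n−1}`, `L` of `L_{n−1}`, with `n = m + 1`.  The
conditional miscoverage of the jackknife+ interval built from the
leave-one-out fits `μ_{β̂₋ᵢ}` satisfies
`P(P_e > α + √(log(2/δ)/(2n)) + 2 L κ₂ c (1/κ₁ + √((n/(2κ₁²)) log(2p/ε)))) ≤ ε + δ`. -/
theorem stmt9 {Ω : Type*} [MeasureSpace Ω] [IsProbabilityMeasure (ℙ : Measure Ω)]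
    {X : Type*} [MeasurableSpace X] [TopologicalSpace X] [BorelSpace X]
    (ν : Measure (X × ℝ)) [IsProbabilityMeasure ν]
    (m p : ℕ) (hp : 0 < p)
    (α c κ₁ κ₂ L : ℝ) (hα : 0 < α) (hα1 : α < 1) (hc : 0 < c)
    (hκ₁ : 0 < κ₁) (hκ₂ : 0 < κ₂) (hL : 0 ≤ L)
    (μ : (Fin p → ℝ) → (X →ᵇ ℝ))
    (hμmeas : Measurable fun q : (Fin p → ℝ) × X => μ q.1 q.2)
    (T : (Fin m → (X × ℝ)) → (Fin p → ℝ)) (hT : Measurable T)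
    (hsym : ∀ (σ : Equiv.Perm (Fin m)) (z : Fin m → X × ℝ), T (z ∘ σ) = T z)
    (hstab : ∀ (i : Fin m) (z z' : Fin m → X × ℝ), (∀ j, j ≠ i → z j = z' j) →
      ‖μ (T z) - μ (T z')‖ ≤ c)
    (hbilip : ∀ β β' : Fin p → ℝ,
      κ₁ * ‖β - β'‖ ≤ ‖μ β - μ β'‖ ∧ ‖μ β - μ β'‖ ≤ κ₂ * ‖β - β'‖)
    (Zs : Fin (m + 1) → Ω → X × ℝ) (hmeas : ∀ i, Measurable (Zs i))
    (hindep : iIndepFun Zs ℙ)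
    (hident : ∀ i, Measure.map (Zs i) ℙ = ν)
    (βbar : Fin p → ℝ)
    (hβbar : βbar = fun j => ∫ ω, T (fun k => Zs ((0 : Fin (m + 1)).succAbove k) ω) j ∂ℙ)
    (hdens : ∀ t t' : ℝ, t ≤ t' →
      (ν {z : X × ℝ | |z.2 - μ βbar z.1| ≤ t'}).toReal -
        (ν {z : X × ℝ | |z.2 - μ βbar z.1| ≤ t}).toReal ≤ L * (t' - t))
    (ε δ : ℝ) (hε : 0 < ε) (hδ : 0 < δ) :
    (ℙ {ω | α + Real.sqrt (Real.log (2 / δ) / (2 * (m + 1)))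
        + 2 * L * κ₂ * c *
            (1 / κ₁ + Real.sqrt (((m + 1) / (2 * κ₁ ^ 2)) * Real.log (2 * p / ε)))
        < (ν {z : X × ℝ |
            ¬ (kthSmallest (fun i : Fin (m + 1) =>
                  μ (T (fun k => Zs (i.succAbove k) ω)) z.1 -
                    |(Zs i ω).2 - μ (T (fun k => Zs (i.succAbove k) ω)) (Zs i ω).1|)
                  ⌊α * (m + 2)⌋₊ ≤ (z.2 : EReal) ∧
                (z.2 : EReal) ≤ kthSmallest (fun i : Fin (m + 1) =>
                  μ (T (fun k => Zs (i.succAbove k) ω)) z.1 +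
                    |(Zs i ω).2 - μ (T (fun k => Zs (i.succAbove k) ω)) (Zs i ω).1|)
                  ⌈(1 - α) * (m + 2)⌉₊)}).toReal}).toReal ≤ ε + δ :=
  stmt9_general ν m p α c κ₁ κ₂ L hα hα1 hc hκ₁ hκ₂ hL μ T hT hsym hstab hbilip Zs hmeas hindep
    hident βbar hβbar hdens ε δ hε hδ
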